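/- arXiv:2310.11680 — 5 statements merged into one kernel-verified Lean document; each statement's English description precedes it below -/
import Mathlib

section
/- Let k and n be positive integers, let Ω be a real symmetric positive semidefinite k×k matrix, and let Ψ_1, …, Ψ_n be real symmetric k×k matrices such that Ψ̄ := n⁻¹ Σ_{i=1}^n Ψ_i is invertible. Then the matrix A_n := Ω − Ψ̄⁻¹ (n⁻¹ Σ_{i=1}^n Ψ_i Ω Ψ_i) Ψ̄⁻¹ is negative semidefinite, i.e. −A_n is positive semidefinite. -/
open Matrix
open scoped BigOperators

private lemma psd_sum {k : ℕ} {ι : Type*} (s : Finset ι)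
    (M : ι → Matrix (Fin k) (Fin k) ℝ) (h : ∀ i ∈ s, (M i).PosSemidef) :
    (∑ i ∈ s, M i).PosSemidef := by
  classical
  induction s using Finset.cons_induction with
  | empty => simpa using Matrix.PosSemidef.zero
  | cons a s ha ih =>
    rw [Finset.sum_cons]
    have h1 := h a (Finset.mem_cons_self a s)
    have h2 := ih fun i hi => h i (Finset.mem_cons_of_mem hi)
    refine .of_dotProduct_mulVec_nonneg (h1.1.add h2.1) fun x => ?_
    rw [Matrix.add_mulVec, dotProduct_add]
    exact add_nonneg (h1.dotProduct_mulVec_nonneg x) (h2.dotProduct_mulVec_nonneg x)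

private lemma psd_smul {k : ℕ} {c : ℝ} (hc : 0 ≤ c)
    {M : Matrix (Fin k) (Fin k) ℝ} (h : M.PosSemidef) : (c • M).PosSemidef := by
  refine .of_dotProduct_mulVec_nonneg ?_ ?_
  · show (c • M)ᴴ = c • M
    rw [Matrix.conjTranspose_smul, star_trivial, h.1.eq]
  · intro x
    rw [Matrix.smul_mulVec, dotProduct_smul]
    exact mul_nonneg hc (h.dotProduct_mulVec_nonneg x)

/-- If `Ω` is a real symmetric positive semidefinite `k×k` matrix,
`Ψ i` are real symmetric `k×k` matrices whose average `Ψbar` is invertible, then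
`A_n := Ω - Ψbar⁻¹ (n⁻¹ ∑ Ψ i Ω Ψ i) Ψbar⁻¹` is negative semidefinite. -/
theorem stmt_0 (k n : ℕ) (hk : 0 < k) (hn : 0 < n)
    (Ω : Matrix (Fin k) (Fin k) ℝ) (hΩ : Ω.PosSemidef)
    (Ψ : Fin n → Matrix (Fin k) (Fin k) ℝ) (hΨsymm : ∀ i, (Ψ i).IsSymm)
    (Ψbar : Matrix (Fin k) (Fin k) ℝ)
    (hΨbar : Ψbar = (n : ℝ)⁻¹ • ∑ i, Ψ i)
    (hΨinv : IsUnit Ψbar) :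
    (-(Ω - Ψbar⁻¹ * ((n : ℝ)⁻¹ • ∑ i, Ψ i * Ω * Ψ i) * Ψbar⁻¹)).PosSemidef := by
  have hn' : (n : ℝ) ≠ 0 := Nat.cast_ne_zero.2 hn.ne'
  have hsumSymm : (∑ i, Ψ i).IsSymm := by
    show (∑ i, Ψ i)ᵀ = ∑ i, Ψ i
    rw [Matrix.transpose_sum]
    exact Finset.sum_congr rfl fun i _ => (hΨsymm i).eq
  have hΨbarSymm : Ψbar.IsSymm := by
    rw [hΨbar]; exact hsumSymm.smul _
  have hBsymm : (Ψbar⁻¹).IsSymm := by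
    show (Ψbar⁻¹)ᵀ = Ψbar⁻¹
    rw [Matrix.transpose_nonsing_inv, hΨbarSymm.eq]
  have hdet : IsUnit Ψbar.det := (Matrix.isUnit_iff_isUnit_det Ψbar).1 hΨinv
  have hBmul : Ψbar⁻¹ * Ψbar = 1 := Matrix.nonsing_inv_mul Ψbar hdet
  have hmulB : Ψbar * Ψbar⁻¹ = 1 := Matrix.mul_nonsing_inv Ψbar hdet
  have hsum : ∑ i, Ψ i = (n : ℝ) • Ψbar := by
    rw [hΨbar, smul_smul, mul_inv_cancel₀ hn', one_smul]
  set S : Matrix (Fin k) (Fin k) ℝ :=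
    (n : ℝ)⁻¹ • ∑ i, (Ψ i - Ψbar) * Ω * (Ψ i - Ψbar) with hS
  have hSpsd : S.PosSemidef := by
    refine psd_smul (by positivity) (psd_sum _ _ fun i _ => ?_)
    have h := hΩ.mul_mul_conjTranspose_same (Ψ i - Ψbar)
    have hsy : (Ψ i - Ψbar)ᴴ = Ψ i - Ψbar := by
      rw [Matrix.conjTranspose_eq_transpose_of_trivial]
      exact ((hΨsymm i).sub hΨbarSymm).eq
    rwa [hsy] at h
  have expand : S = ((n : ℝ)⁻¹ • ∑ i, Ψ i * Ω * Ψ i) - Ψbar * Ω * Ψbar := by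
    rw [hS]
    simp only [Matrix.sub_mul, Matrix.mul_sub, Finset.sum_sub_distrib,
      ← Finset.sum_mul, ← Matrix.mul_sum, hsum]
    simp only [Matrix.smul_mul, Matrix.mul_smul, smul_sub, Finset.sum_const,
      Finset.card_univ, Fintype.card_fin, ← Nat.cast_smul_eq_nsmul ℝ, smul_smul,
      inv_mul_cancel₀ hn', one_smul]
    abel
  have hmid : Ψbar⁻¹ * (Ψbar * Ω * Ψbar) * Ψbar⁻¹ = Ω := by
    have h1 : Ψbar⁻¹ * (Ψbar * Ω * Ψbar) = Ω * Ψbar := by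
      rw [← Matrix.mul_assoc, ← Matrix.mul_assoc, hBmul, Matrix.one_mul]
    rw [h1, Matrix.mul_assoc, hmulB, Matrix.mul_one]
  have key : Ψbar⁻¹ * S * Ψbar⁻¹ =
      -(Ω - Ψbar⁻¹ * ((n : ℝ)⁻¹ • ∑ i, Ψ i * Ω * Ψ i) * Ψbar⁻¹) := by
    rw [expand, Matrix.mul_sub, Matrix.sub_mul, hmid]
    abel
  have h := hSpsd.mul_mul_conjTranspose_same Ψbar⁻¹
  rw [Matrix.conjTranspose_eq_transpose_of_trivial, hBsymm.eq, key] at h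
  exact h
end

section
/- Fix positive integers T, n, k′. For i = 1, …, n let X_i be a real T×k′ matrix, u_i ∈ ℝ^T, α_i ∈ ℝ, β_i ∈ ℝ^{k′}, and y_i = α_i τ_T + X_i β_i + u_i. Fix β₀ ∈ ℝ^{k′} and set ν_i := u_i + X_i(β_i − β₀). Let W_i := (τ_T, X_i) be the T×(k′+1) matrix obtained by appending a column of ones, d_i := det(W_iᵀW_i), and for a fixed a > 0 let δ_i := ((d_i − a)/a)·1{d_i ≤ a} and δ̄_n := n⁻¹ Σ_i δ_i with 1 + δ̄_n ≠ 0. Assume Ψ_{ix} := X_iᵀ M_T X_i is invertible for every i and Ψ̄_n := n⁻¹ Σ_i Ψ_{ix} is invertible. Define β̂_FE := Ψ̄_n⁻¹ (n⁻¹ Σ_i X_iᵀM_T y_i) and β̂_TMG := (1 + δ̄_n)⁻¹ n⁻¹ Σ_i (1 + δ_i) Ψ_{ix}⁻¹ X_iᵀ M_T y_i. Then β̂_FE − β̂_TMG = n⁻¹ Σ_{i=1}^n Ĝ_iᵀ M_T ν_i, where Ĝ_iᵀ := [ Ψ̄_n⁻¹ − ((1 + δ_i)/(1 + δ̄_n))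 Ψ_{ix}⁻¹ ] X_iᵀ. -/
open Matrix
open scoped BigOperators

/-- The de-meaning projection matrix `M_T = I_T - T⁻¹ τ_T τ_Tᵀ`. -/
noncomputable def demean (T : ℕ) : Matrix (Fin T) (Fin T) ℝ :=
  (1 : Matrix (Fin T) (Fin T) ℝ) - (T : ℝ)⁻¹ • Matrix.of (fun _ _ => (1 : ℝ))

lemma demean_ones (T : ℕ) (hT : 0 < T) :
    (demean T).mulVec (fun _ => (1 : ℝ)) = 0 := by
  have hTne : (T : ℝ) ≠ 0 := Nat.cast_ne_zero.mpr hT.ne'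
  rw [demean, Matrix.sub_mulVec, Matrix.one_mulVec, Matrix.smul_mulVec]
  ext t
  simp [Matrix.mulVec, dotProduct, hTne]

lemma mulVec_sum' {k t ι : Type*} [Fintype k] [Fintype t] (s : Finset ι)
    (M : Matrix k t ℝ) (v : ι → t → ℝ) :
    M.mulVec (∑ i ∈ s, v i) = ∑ i ∈ s, M.mulVec (v i) := by
  ext j
  simp only [Matrix.mulVec, dotProduct, Finset.sum_apply, Finset.mul_sum]
  rw [Finset.sum_comm]

lemma sum_mulVec' {k t ι : Type*} [Fintype k] [Fintype t] (s : Finset ι)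
    (M : ι → Matrix k t ℝ) (v : t → ℝ) :
    (∑ i ∈ s, M i).mulVec v = ∑ i ∈ s, (M i).mulVec v := by
  ext j
  simp only [Matrix.mulVec, dotProduct, Matrix.sum_apply, Finset.sum_mul, Finset.sum_apply]
  rw [Finset.sum_comm]

/-- exact finite-sample decomposition underlying the Hausman test:
`β̂_FE - β̂_TMG = n⁻¹ ∑ᵢ Ĝᵢᵀ M_T νᵢ` with
`Ĝᵢᵀ = [Ψ̄ₙ⁻¹ - ((1+δᵢ)/(1+δ̄ₙ)) Ψᵢₓ⁻¹] Xᵢᵀ` and `νᵢ = uᵢ + Xᵢ(βᵢ - β₀)`. -/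
theorem stmt_4 (T n k' : ℕ) (hT : 0 < T) (hn : 0 < n) (hk' : 0 < k')
    (a : ℝ) (ha : 0 < a)
    (X : Fin n → Matrix (Fin T) (Fin k') ℝ)
    (u : Fin n → Fin T → ℝ) (α : Fin n → ℝ) (β : Fin n → Fin k' → ℝ)
    (y : Fin n → Fin T → ℝ)
    (hy : ∀ i, y i = α i • (fun _ => (1 : ℝ)) + (X i).mulVec (β i) + u i)
    (β₀ : Fin k' → ℝ)
    (ν : Fin n → Fin T → ℝ) (hν : ∀ i, ν i = u i + (X i).mulVec (β i - β₀))
    (W : Fin n → Matrix (Fin T) (Unit ⊕ Fin k') ℝ)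
    (hW : ∀ i, W i = Matrix.fromCols (Matrix.of fun _ _ => (1 : ℝ)) (X i))
    (d : Fin n → ℝ) (hd : ∀ i, d i = ((W i)ᵀ * W i).det)
    (δ : Fin n → ℝ) (hδ : ∀ i, δ i = if d i ≤ a then (d i - a) / a else 0)
    (δbar : ℝ) (hδbar : δbar = (n : ℝ)⁻¹ * ∑ i, δ i)
    (hδne : 1 + δbar ≠ 0)
    (Ψ : Fin n → Matrix (Fin k') (Fin k') ℝ)
    (hΨ : ∀ i, Ψ i = (X i)ᵀ * demean T * X i)
    (hΨinv : ∀ i, IsUnit (Ψ i))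
    (Ψbar : Matrix (Fin k') (Fin k') ℝ) (hΨbar : Ψbar = (n : ℝ)⁻¹ • ∑ i, Ψ i)
    (hΨbarinv : IsUnit Ψbar)
    (βFE : Fin k' → ℝ)
    (hβFE : βFE = Ψbar⁻¹.mulVec ((n : ℝ)⁻¹ • ∑ i, ((X i)ᵀ * demean T).mulVec (y i)))
    (βTMG : Fin k' → ℝ)
    (hβTMG : βTMG = (1 + δbar)⁻¹ •
      ((n : ℝ)⁻¹ • ∑ i, (1 + δ i) • ((Ψ i)⁻¹ * (X i)ᵀ * demean T).mulVec (y i))) :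
    βFE - βTMG
      = (n : ℝ)⁻¹ • ∑ i,
          ((Ψbar⁻¹ - ((1 + δ i) / (1 + δbar)) • (Ψ i)⁻¹) * (X i)ᵀ * demean T).mulVec (ν i) := by
  have hτ : (demean T).mulVec (fun _ => (1 : ℝ)) = 0 := demean_ones T hT
  have hnne : (n : ℝ) ≠ 0 := Nat.cast_ne_zero.mpr hn.ne'
  -- key decomposition of the moment vector
  have key : ∀ i, ((X i)ᵀ * demean T).mulVec (y i)
      = ((X i)ᵀ * demean T).mulVec (ν i) + (Ψ i).mulVec β₀ := by
    intro i
    rw [hy, hν, hΨ]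
    have h1 : ((X i)ᵀ * demean T).mulVec (α i • (fun _ => (1 : ℝ))) = 0 := by
      rw [Matrix.mulVec_smul, ← Matrix.mulVec_mulVec, hτ]
      simp
    have h2 : ((X i)ᵀ * demean T * X i).mulVec β₀
        = ((X i)ᵀ * demean T).mulVec ((X i).mulVec β₀) := by
      rw [Matrix.mulVec_mulVec]
    rw [Matrix.mulVec_add, Matrix.mulVec_add, h1, h2, Matrix.mulVec_add,
      Matrix.mulVec_sub, Matrix.mulVec_sub]
    abel
  have hΨbardet : IsUnit Ψbar.det := (Matrix.isUnit_iff_isUnit_det _).mp hΨbarinv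
  -- FE estimator decomposition
  have hFE : βFE
      = Ψbar⁻¹.mulVec ((n : ℝ)⁻¹ • ∑ i, ((X i)ᵀ * demean T).mulVec (ν i)) + β₀ := by
    rw [hβFE]
    have hsy : ∑ i, ((X i)ᵀ * demean T).mulVec (y i)
        = (∑ i, ((X i)ᵀ * demean T).mulVec (ν i)) + (∑ i, Ψ i).mulVec β₀ := by
      rw [sum_mulVec', ← Finset.sum_add_distrib]
      exact Finset.sum_congr rfl fun i _ => key i
    rw [hsy, smul_add, Matrix.mulVec_add]
    congr 1
    rw [← Matrix.smul_mulVec, ← hΨbar, Matrix.mulVec_mulVec,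
      Matrix.nonsing_inv_mul _ hΨbardet, Matrix.one_mulVec]
  -- TMG estimator decomposition
  have hTMG : βTMG = (1 + δbar)⁻¹ •
      ((n : ℝ)⁻¹ • ∑ i, (1 + δ i) • ((Ψ i)⁻¹ * (X i)ᵀ * demean T).mulVec (ν i)) + β₀ := by
    rw [hβTMG]
    have hterm : ∀ i, (1 + δ i) • ((Ψ i)⁻¹ * (X i)ᵀ * demean T).mulVec (y i)
        = (1 + δ i) • ((Ψ i)⁻¹ * (X i)ᵀ * demean T).mulVec (ν i) + (1 + δ i) • β₀ := by
      intro i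
      have hdet : IsUnit (Ψ i).det := (Matrix.isUnit_iff_isUnit_det _).mp (hΨinv i)
      rw [Matrix.mul_assoc, ← Matrix.mulVec_mulVec, key i, Matrix.mulVec_add,
        Matrix.mulVec_mulVec, Matrix.mulVec_mulVec,
        Matrix.nonsing_inv_mul _ hdet, Matrix.one_mulVec, smul_add,
        ← Matrix.mul_assoc]
    have hsum : ∑ i, (1 + δ i) • ((Ψ i)⁻¹ * (X i)ᵀ * demean T).mulVec (y i)
        = (∑ i, (1 + δ i) • ((Ψ i)⁻¹ * (X i)ᵀ * demean T).mulVec (ν i))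
          + (∑ i, (1 + δ i)) • β₀ := by
      rw [Finset.sum_smul, ← Finset.sum_add_distrib]
      exact Finset.sum_congr rfl fun i _ => hterm i
    rw [hsum, smul_add, smul_add]
    congr 1
    rw [smul_smul, smul_smul, mul_assoc]
    have hds : ((n : ℝ)⁻¹ * ∑ i, (1 + δ i)) = 1 + δbar := by
      rw [Finset.sum_add_distrib, Finset.sum_const, hδbar]
      field_simp
      simp [Finset.card_univ]
    rw [hds, inv_mul_cancel₀ hδne, one_smul]
  rw [hFE, hTMG, add_sub_add_right_eq_sub]
  have hRHS : ∀ i,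
      ((Ψbar⁻¹ - ((1 + δ i) / (1 + δbar)) • (Ψ i)⁻¹) * (X i)ᵀ * demean T).mulVec (ν i)
      = (Ψbar⁻¹ * ((X i)ᵀ * demean T)).mulVec (ν i)
        - ((1 + δ i) / (1 + δbar)) • ((Ψ i)⁻¹ * ((X i)ᵀ * demean T)).mulVec (ν i) := by
    intro i
    rw [Matrix.mul_assoc, Matrix.sub_mul, Matrix.sub_mulVec, Matrix.smul_mul,
      Matrix.smul_mulVec]
  have hL : Ψbar⁻¹.mulVec ((n : ℝ)⁻¹ • ∑ i, ((X i)ᵀ * demean T).mulVec (ν i))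
      = (n : ℝ)⁻¹ • ∑ i, (Ψbar⁻¹ * ((X i)ᵀ * demean T)).mulVec (ν i) := by
    rw [Matrix.mulVec_smul, mulVec_sum']
    congr 1
    exact Finset.sum_congr rfl fun i _ => by rw [Matrix.mulVec_mulVec]
  simp only [hRHS, hL]
  simp only [Matrix.mul_assoc]
  rw [Finset.smul_sum, Finset.smul_sum, Finset.smul_sum, Finset.smul_sum,
    ← Finset.sum_sub_distrib]
  refine Finset.sum_congr rfl fun i _ => ?_
  match_scalars <;> simp only [div_eq_mul_inv] <;> ring
end

section
/- Fix positive integers T, n, k′. For i = 1, …, n let X_i be a real T×k′ matrix with X_iᵀ M_T X_i invertible, and define M_i := I_T − M_T X_i (X_iᵀ M_T X_i)⁻¹ X_iᵀ M_T. Suppose y_i = α_i τ_T + φ + X_i β_i + u_i with α_i ∈ ℝ, β_i ∈ ℝ^{k′}, u_i ∈ ℝ^T, and φ ∈ ℝ^T satisfying τ_Tᵀ φ = 0. Then (a) M_i M_T y_i = M_i φ + M_i M_T u_i for every i; and (b) if additionally M̄_n := n⁻¹ Σ_{i=1}^n M_i is invertible, then the Chamberlain-type time-effects estimator φ̂_C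 := M̄_n⁻¹ (n⁻¹ Σ_{i=1}^n M_i M_T y_i) satisfies φ̂_C − φ = M̄_n⁻¹ (n⁻¹ Σ_{i=1}^n M_i M_T u_i). -/
open Matrix
open scoped BigOperators

lemma demean_mulVec_one (T : ℕ) (hT : 0 < T) :
    (demean T).mulVec (fun _ => (1:ℝ)) = 0 := by
  funext i
  simp [demean, mulVec, dotProduct, Matrix.one_apply, Finset.sum_sub_distrib,
    Finset.card_univ, mul_comm,
    mul_inv_cancel₀ (Nat.cast_ne_zero.mpr hT.ne' : (T:ℝ) ≠ 0)]

lemma demean_mulVec_fixed (T : ℕ) (φ : Fin T → ℝ)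
    (hφ : (fun _ => (1 : ℝ)) ⬝ᵥ φ = 0) : (demean T).mulVec φ = φ := by
  have hs : ∑ j, φ j = 0 := by simpa [dotProduct] using hφ
  funext i
  simp [demean, mulVec, dotProduct, Matrix.one_apply, sub_mul,
    Finset.sum_sub_distrib, ← Finset.mul_sum, hs]

lemma demean_idem (T : ℕ) : demean T * demean T = demean T := by
  rcases Nat.eq_zero_or_pos T with h | h
  · subst h; ext i j; exact absurd i.2 (by simp)
  have hT : (T:ℝ) ≠ 0 := Nat.cast_ne_zero.mpr h.ne'
  have hJJ : (Matrix.of (fun _ _ => (1:ℝ)) : Matrix (Fin T) (Fin T) ℝ) *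
      Matrix.of (fun _ _ => (1:ℝ)) = (T:ℝ) • Matrix.of (fun _ _ => (1:ℝ)) := by
    ext i j; simp [Matrix.mul_apply, Finset.card_univ]
  simp only [demean, sub_mul, mul_sub, one_mul, mul_one, Matrix.mul_smul,
    Matrix.smul_mul, hJJ, smul_smul]
  rw [inv_mul_cancel₀ hT]
  ring_nf
  abel

lemma Mi_mul_demean_mul_X (T k' : ℕ) (X : Matrix (Fin T) (Fin k') ℝ)
    (hXinv : IsUnit (Xᵀ * demean T * X)) :
    (1 - demean T * X * (Xᵀ * demean T * X)⁻¹ * Xᵀ * demean T) * demean T * X = 0 := by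
  have hinv : (Xᵀ * demean T * X)⁻¹ * (Xᵀ * demean T * X) = 1 :=
    Matrix.nonsing_inv_mul _ ((Matrix.isUnit_iff_isUnit_det _).mp hXinv)
  calc (1 - demean T * X * (Xᵀ * demean T * X)⁻¹ * Xᵀ * demean T) * demean T * X
      = demean T * X - demean T * X * ((Xᵀ * demean T * X)⁻¹ * (Xᵀ * (demean T * demean T) * X)) := by
        noncomm_ring
        simp only [Matrix.add_mul, Matrix.smul_mul, Matrix.mul_assoc]
    _ = 0 := by rw [demean_idem, hinv]; simp

/-- with `Mᵢ := I - M_T Xᵢ (XᵢᵀM_TXᵢ)⁻¹ XᵢᵀM_T`, in the model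
`yᵢ = αᵢτ_T + φ + Xᵢβᵢ + uᵢ` with `τ_Tᵀφ = 0`:
(a) `Mᵢ M_T yᵢ = Mᵢ φ + Mᵢ M_T uᵢ`, and
(b) if `M̄ₙ := n⁻¹ ∑ Mᵢ` is invertible, the Chamberlain time-effects estimator
satisfies `φ̂_C - φ = M̄ₙ⁻¹ (n⁻¹ ∑ Mᵢ M_T uᵢ)`. -/
theorem stmt_5 (T n k' : ℕ) (hT : 0 < T) (hn : 0 < n) (hk' : 0 < k')
    (X : Fin n → Matrix (Fin T) (Fin k') ℝ)
    (hXinv : ∀ i, IsUnit ((X i)ᵀ * demean T * X i))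
    (M : Fin n → Matrix (Fin T) (Fin T) ℝ)
    (hM : ∀ i, M i =
      1 - demean T * X i * ((X i)ᵀ * demean T * X i)⁻¹ * (X i)ᵀ * demean T)
    (u : Fin n → Fin T → ℝ) (α : Fin n → ℝ) (β : Fin n → Fin k' → ℝ)
    (φ : Fin T → ℝ) (hφ : (fun _ => (1 : ℝ)) ⬝ᵥ φ = 0)
    (y : Fin n → Fin T → ℝ)
    (hy : ∀ i, y i = α i • (fun _ => (1 : ℝ)) + φ + (X i).mulVec (β i) + u i) :
    (∀ i, (M i * demean T).mulVec (y i)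
        = (M i).mulVec φ + (M i * demean T).mulVec (u i))
    ∧ ∀ Mbar : Matrix (Fin T) (Fin T) ℝ, Mbar = (n : ℝ)⁻¹ • ∑ i, M i → IsUnit Mbar →
        Mbar⁻¹.mulVec ((n : ℝ)⁻¹ • ∑ i, (M i * demean T).mulVec (y i)) - φ
          = Mbar⁻¹.mulVec ((n : ℝ)⁻¹ • ∑ i, (M i * demean T).mulVec (u i)) := by
  have ha : ∀ i, (M i * demean T).mulVec (y i)
      = (M i).mulVec φ + (M i * demean T).mulVec (u i) := by
    intro i
    have hzero : M i * demean T * X i = 0 := by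
      rw [hM i]; exact Mi_mul_demean_mul_X T k' (X i) (hXinv i)
    have hzero2 : (M i * demean T).mulVec ((X i).mulVec (β i)) = 0 := by
      rw [Matrix.mulVec_mulVec, hzero, Matrix.zero_mulVec]
    rw [hy i]
    simp only [Matrix.mulVec_add, ← Matrix.mulVec_mulVec]
    rw [Matrix.mulVec_smul, demean_mulVec_one T hT, demean_mulVec_fixed T φ hφ]
    rw [Matrix.mulVec_mulVec] at hzero2 ⊢
    simp [hzero2]
  refine ⟨ha, ?_⟩
  intro Mbar hMbar hUnit
  have hinv : Mbar⁻¹ * Mbar = 1 :=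
    Matrix.nonsing_inv_mul _ ((Matrix.isUnit_iff_isUnit_det _).mp hUnit)
  have hsum : (n : ℝ)⁻¹ • ∑ i, (M i * demean T).mulVec (y i)
      = Mbar.mulVec φ + (n : ℝ)⁻¹ • ∑ i, (M i * demean T).mulVec (u i) := by
    rw [hMbar]
    simp only [ha]
    rw [Finset.sum_add_distrib, smul_add]
    congr 1
    rw [Matrix.smul_mulVec]
    congr 1
    ext t
    simp only [Matrix.mulVec, dotProduct, Finset.sum_apply,
      Matrix.sum_apply, Finset.sum_mul]
    rw [Finset.sum_comm]
  rw [hsum, Matrix.mulVec_add, Matrix.mulVec_mulVec, hinv, Matrix.one_mulVec]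
  abel
end

section
/- Let (Ω, F, P) be a probability space and fix positive integers T ≥ k ≥ 1 and n. For i = 1, …, n let m_i ⊆ F be a sub-σ-algebra, let W_i be a random real T×k matrix that is strongly m_i-measurable and has W_iᵀW_i invertible everywhere, let u_i : Ω → ℝ^T be integrable with conditional expectation E[u_i | m_i] = 0 almost surely (componentwise), let θ_i : Ω → ℝ^k be integrable with E[θ_i] = θ₀ for a fixed θ₀ ∈ ℝ^k, and set y_i := W_i θ_i + u_i. Assume every entry of ξ_i := (W_iᵀW_i)⁻¹ W_iᵀ u_i is integrable. Then the mean group estimator θ̂_MG := n⁻¹ Σ_{i=1}^n (W_iᵀW_i)⁻¹ W_iᵀ y_i satisfies E[θ̂_MG] = θ₀; in particular θ̂_MG is an unbiased estimator of θ₀ irrespective of any dependence between θ_i and W_i. -/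
open Matrix MeasureTheory Filter
open scoped BigOperators Topology

/-- If each `c t` is `m`-measurable, each `u t` is integrable with `E[u t | m] = 0` a.s.,
and the sum `∑ t, c t * u t` is integrable, then its integral is `0`. -/
theorem key_lemma {Ω : Type*} [mΩ : MeasurableSpace Ω] (P : Measure Ω)
    [IsProbabilityMeasure P] {m : MeasurableSpace Ω} (hm : m ≤ mΩ)
    (T : ℕ) (c : Ω → Fin T → ℝ)
    (hc : ∀ t, StronglyMeasurable[m] (fun ω => c ω t))
    (u : Ω → Fin T → ℝ)
    (hu : ∀ t, Integrable (fun ω => u ω t) P)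
    (hcond : ∀ t, P[(fun ω => u ω t) | m] =ᵐ[P] 0)
    (hint : Integrable (fun ω => ∑ t, c ω t * u ω t) P) :
    ∫ ω, ∑ t, c ω t * u ω t ∂P = 0 := by
  set g : Ω → ℝ := fun ω => ∑ t, c ω t * u ω t with hg
  set A : ℕ → Set Ω := fun N => {ω | ∀ t, |c ω t| ≤ N} with hA
  have hAmeas : ∀ N, MeasurableSet[m] (A N) := by
    intro N
    have : A N = ⋂ t, {ω | |c ω t| ≤ N} := by
      ext ω; simp [hA, Set.mem_iInter]
    rw [this]
    exact MeasurableSet.iInter fun t =>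
      measurableSet_le ((hc t).measurable.abs) measurable_const
  -- integral over each truncation is zero
  have hzero : ∀ N : ℕ, ∫ ω, (A N).indicator g ω ∂P = 0 := by
    intro N
    have hind : (A N).indicator g
        = fun ω => ∑ t, ((A N).indicator (fun ω' => c ω' t) ω) * u ω t := by
      funext ω
      by_cases hω : ω ∈ A N
      · simp [Set.indicator_of_mem hω, hg]
      · simp [Set.indicator_of_notMem hω]
    rw [hind]
    have hterm : ∀ t, ∫ ω, ((A N).indicator (fun ω' => c ω' t) ω) * u ω t ∂P = 0 := by
      intro t
      set f : Ω → ℝ := (A N).indicator (fun ω' => c ω' t) with hf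
      have hfm : StronglyMeasurable[m] f := (hc t).indicator (hAmeas N)
      have hfb : ∀ ω, ‖f ω‖ ≤ (N : ℝ) := by
        intro ω
        by_cases hω : ω ∈ A N
        · simpa [hf, Set.indicator_of_mem hω] using hω t
        · simp [hf, Set.indicator_of_notMem hω]
      have hfu_int : Integrable (fun ω => f ω * u ω t) P := by
        refine (hu t).bdd_mul (c := (N : ℝ)) ((hfm.mono hm).aestronglyMeasurable) ?_
        exact Eventually.of_forall hfb
      have h1 : P[(fun ω => f ω * u ω t) | m] =ᵐ[P] 0 := by
        have h2 := condExp_stronglyMeasurable_mul_of_bound hm hfm (hu t) (N : ℝ)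
          (Eventually.of_forall hfb)
        refine h2.trans ?_
        filter_upwards [hcond t] with ω hω
        simp [hω]
      calc ∫ ω, f ω * u ω t ∂P = ∫ ω, (P[(fun ω => f ω * u ω t) | m]) ω ∂P :=
            (integral_condExp hm).symm
        _ = 0 := by rw [integral_congr_ae h1]; simp
    rw [integral_finset_sum]
    · simp [hterm]
    · intro t _
      exact ((hu t).bdd_mul (c := (N : ℝ)) (((hc t).indicator (hAmeas N)).mono hm).aestronglyMeasurable
        (Eventually.of_forall (by
          intro ω
          by_cases hω : ω ∈ A N
          · simpa [Set.indicator_of_mem hω] using hω t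
          · simp [Set.indicator_of_notMem hω])))
  -- dominated convergence
  have htendsto : Tendsto (fun N : ℕ => ∫ ω, (A N).indicator g ω ∂P) atTop (𝓝 (∫ ω, g ω ∂P)) := by
    refine tendsto_integral_of_dominated_convergence (fun ω => ‖g ω‖) ?_ hint.norm ?_ ?_
    · intro N
      exact ((hint.aestronglyMeasurable).indicator (hm _ (hAmeas N)))
    · intro N
      exact Eventually.of_forall fun ω => norm_indicator_le_norm_self g ω
    · refine Eventually.of_forall fun ω => ?_
      obtain ⟨N₀, hN₀⟩ := exists_nat_ge (∑ t, |c ω t|)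
      have hmem : ∀ N ≥ N₀, ω ∈ A N := by
        intro N hN t
        calc |c ω t| ≤ ∑ t, |c ω t| :=
              Finset.single_le_sum (f := fun t => |c ω t|) (fun t _ => abs_nonneg _) (Finset.mem_univ t)
          _ ≤ N₀ := hN₀
          _ ≤ N := Nat.cast_le.2 hN
      refine tendsto_const_nhds.congr' ?_
      filter_upwards [eventually_ge_atTop N₀] with N hN
      exact (Set.indicator_of_mem (hmem N hN) g).symm
  have := tendsto_nhds_unique htendsto (by simpa [hzero] using tendsto_const_nhds :
    Tendsto (fun N : ℕ => ∫ ω, (A N).indicator g ω ∂P) atTop (𝓝 (0 : ℝ)))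
  linarith [this]

/-- unbiasedness of the mean group estimator: if `yᵢ = Wᵢθᵢ + uᵢ` with
`Wᵢ` strongly `mᵢ`-measurable, `E[uᵢ | mᵢ] = 0` a.s., and `E[θᵢ] = θ₀`, then
`E[θ̂_MG] = θ₀`, irrespective of dependence between `θᵢ` and `Wᵢ`. -/
theorem stmt_8 {Ω : Type*} [mΩ : MeasurableSpace Ω] (P : Measure Ω)
    [IsProbabilityMeasure P]
    (T k n : ℕ) (hTk : k ≤ T) (hk : 0 < k) (hn : 0 < n)
    (m : Fin n → MeasurableSpace Ω) (hm : ∀ i, m i ≤ mΩ)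
    (W : Fin n → Ω → Matrix (Fin T) (Fin k) ℝ)
    (hW : ∀ i t j, StronglyMeasurable[m i] (fun ω => W i ω t j))
    (hWinv : ∀ i ω, IsUnit ((W i ω)ᵀ * W i ω))
    (u : Fin n → Ω → Fin T → ℝ)
    (hu_int : ∀ i t, Integrable (fun ω => u i ω t) P)
    (hu_cond : ∀ i t, P[(fun ω => u i ω t) | m i] =ᵐ[P] 0)
    (θ : Fin n → Ω → Fin k → ℝ)
    (hθ_int : ∀ i j, Integrable (fun ω => θ i ω j) P)
    (θ₀ : Fin k → ℝ) (hθ₀ : ∀ i j, ∫ ω, θ i ω j ∂P = θ₀ j)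
    (y : Fin n → Ω → Fin T → ℝ)
    (hy : ∀ i ω, y i ω = (W i ω).mulVec (θ i ω) + u i ω)
    (ξ : Fin n → Ω → Fin k → ℝ)
    (hξ : ∀ i ω, ξ i ω = ((W i ω)ᵀ * W i ω)⁻¹.mulVec ((W i ω)ᵀ.mulVec (u i ω)))
    (hξ_int : ∀ i j, Integrable (fun ω => ξ i ω j) P)
    (θMG : Ω → Fin k → ℝ)
    (hθMG : ∀ ω, θMG ω
      = (n : ℝ)⁻¹ • ∑ i, ((W i ω)ᵀ * W i ω)⁻¹.mulVec ((W i ω)ᵀ.mulVec (y i ω))) :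
    ∀ j, ∫ ω, θMG ω j ∂P = θ₀ j := by
  intro j
  -- algebra: (WᵀW)⁻¹ Wᵀ y = θ + ξ
  have halg : ∀ i ω,
      ((W i ω)ᵀ * W i ω)⁻¹.mulVec ((W i ω)ᵀ.mulVec (y i ω)) = θ i ω + ξ i ω := by
    intro i ω
    have hdet : IsUnit ((W i ω)ᵀ * W i ω).det :=
      ((W i ω)ᵀ * W i ω).isUnit_iff_isUnit_det.mp (hWinv i ω)
    rw [hy, hξ, Matrix.mulVec_add, Matrix.mulVec_add, Matrix.mulVec_mulVec (θ i ω),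
      Matrix.mulVec_mulVec, Matrix.nonsing_inv_mul _ hdet, Matrix.one_mulVec]
  -- each ξ has zero mean
  have hξ0 : ∀ i, ∫ ω, ξ i ω j ∂P = 0 := by
    intro i
    set c : Ω → Fin T → ℝ := fun ω t => (((W i ω)ᵀ * W i ω)⁻¹ * (W i ω)ᵀ) j t with hc
    have hξj : ∀ ω, ξ i ω j = ∑ t, c ω t * u i ω t := by
      intro ω
      rw [hξ, Matrix.mulVec_mulVec]
      simp [Matrix.mulVec, dotProduct, hc]
    have hMe : ∀ a b, Measurable[m i] (fun ω => ((W i ω)ᵀ * W i ω) a b) := by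
      intro a b
      simp only [Matrix.mul_apply, Matrix.transpose_apply]
      exact Finset.measurable_sum _ fun r _ => ((hW i r a).measurable.mul (hW i r b).measurable)
    have hdetfun : ∀ (M : Ω → Matrix (Fin k) (Fin k) ℝ),
        (∀ a b, Measurable[m i] (fun ω => M ω a b)) →
        Measurable[m i] (fun ω => (M ω).det) := by
      intro M hM
      simp_rw [Matrix.det_apply']
      exact Finset.measurable_sum _ fun σ _ =>
        (Finset.measurable_prod _ fun x _ => hM _ _).const_mul _
    have hdet : Measurable[m i] (fun ω => ((W i ω)ᵀ * W i ω).det) := hdetfun _ hMe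
    have hadj : ∀ a b, Measurable[m i] (fun ω => ((W i ω)ᵀ * W i ω).adjugate a b) := by
      intro a b
      simp_rw [Matrix.adjugate_apply]
      refine hdetfun _ fun a' b' => ?_
      simp_rw [Matrix.updateRow_apply]
      by_cases h : a' = b
      · simp [h]
      · simpa [h] using hMe a' b'
    have hinv : ∀ a b, Measurable[m i] (fun ω => (((W i ω)ᵀ * W i ω)⁻¹) a b) := by
      intro a b
      simp_rw [Matrix.inv_def, Ring.inverse_eq_inv, Matrix.smul_apply, smul_eq_mul]
      exact hdet.inv.mul (hadj a b)
    have hcm : ∀ t, StronglyMeasurable[m i] (fun ω => c ω t) := by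
      intro t
      have : (fun ω => c ω t)
          = fun ω => ∑ s, (((W i ω)ᵀ * W i ω)⁻¹) j s * W i ω t s := by
        funext ω
        simp [hc, Matrix.mul_apply, Matrix.transpose_apply]
      rw [this]
      exact (Finset.measurable_sum _ fun s _ =>
        (hinv j s).mul (hW i t s).measurable).stronglyMeasurable
    have hsum_int : Integrable (fun ω => ∑ t, c ω t * u i ω t) P :=
      (hξ_int i j).congr (Filter.Eventually.of_forall fun ω => hξj ω)
    have h0 := key_lemma P (hm i) T c hcm (u i) (hu_int i) (hu_cond i) hsum_int
    rw [integral_congr_ae (Filter.Eventually.of_forall hξj), h0]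
  -- put everything together
  have hθMGj : ∀ ω, θMG ω j = (n : ℝ)⁻¹ * ∑ i, (θ i ω j + ξ i ω j) := by
    intro ω
    rw [hθMG]
    simp only [Pi.smul_apply, Finset.sum_apply, smul_eq_mul]
    congr 1
    refine Finset.sum_congr rfl fun i _ => ?_
    rw [halg i ω]
    rfl
  rw [integral_congr_ae (Filter.Eventually.of_forall hθMGj), integral_const_mul,
    integral_finset_sum (f := fun i ω => θ i ω j + ξ i ω j) Finset.univ
      (fun i _ => (hθ_int i j).add (hξ_int i j))]
  have : ∀ i ∈ (Finset.univ : Finset (Fin n)),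
      ∫ ω, (θ i ω j + ξ i ω j) ∂P = θ₀ j := by
    intro i _
    rw [integral_add (hθ_int i j) (hξ_int i j), hθ₀ i j, hξ0 i, add_zero]
  rw [Finset.sum_congr rfl this]
  simp only [Finset.sum_const, Finset.card_univ, Fintype.card_fin, nsmul_eq_mul]
  rw [← mul_assoc, inv_mul_cancel₀ (by exact_mod_cast hn.ne' : (n : ℝ) ≠ 0), one_mul]
end

section
/- Let (Ω, F, P) be a probability space and let d : Ω → [0, ∞) be a random variable whose distribution has a Lebesgue density bounded by C_f on [0, a] for some a > 0 and C_f > 0. Fix a positive integer k and let η := B·(g(d) − E[g(d)]) + ε, where B is a fixed real k×k matrix with operator norm ‖B‖ ≤ C_B, g : ℝ → ℝ^k is a measurable function with ‖g(u)‖ ≤ G for all u, and ε : Ω → ℝ^k is integrable with E[ε | σ(d)] = 0 almost surely. Define δ := ((d − a)/a)·1{d ≤ a}. Then ‖E[δ·η]‖ ≤ 2·C_B·G·C_f·a and ‖E[δ²·η]‖ ≤ 2·C_B·G·C_f·a. -/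
open Matrix MeasureTheory
open scoped BigOperators

private lemma aux_12 {Ω : Type*} [mΩ : MeasurableSpace Ω] (P : Measure Ω)
    [IsProbabilityMeasure P]
    (d : Ω → ℝ) (hd_meas : Measurable d) (hd0 : ∀ ω, 0 ≤ d ω)
    (f : ℝ → ℝ)
    (hf : Measure.map d P = volume.withDensity (fun u => ENNReal.ofReal (f u)))
    (a Cf : ℝ) (ha : 0 < a) (hCf : 0 < Cf)
    (hfC : ∀ᵐ u ∂(volume.restrict (Set.Icc (0 : ℝ) a)), f u ≤ Cf)
    (k : ℕ)
    (B : Matrix (Fin k) (Fin k) ℝ) (CB : ℝ)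
    (hB : ‖Matrix.toEuclideanCLM (𝕜 := ℝ) B‖ ≤ CB)
    (g : ℝ → Fin k → ℝ) (hg_meas : Measurable g) (G : ℝ)
    (hg : ∀ u, Real.sqrt (∑ j, (g u j) ^ 2) ≤ G)
    (ε : Ω → Fin k → ℝ)
    (hε_int : ∀ j, Integrable (fun ω => ε ω j) P)
    (hε_cond : ∀ j,
      P[(fun ω => ε ω j) | MeasurableSpace.comap d inferInstance] =ᵐ[P] 0)
    (η : Ω → Fin k → ℝ)
    (hη : ∀ ω, η ω = B.mulVec (fun j => g (d ω) j - ∫ ω', g (d ω') j ∂P) + ε ω)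
    (φ : ℝ → ℝ) (hφ_meas : Measurable φ)
    (hφ1 : ∀ ω, |φ (d ω)| ≤ if d ω ≤ a then 1 else 0) :
    Real.sqrt (∑ j, (∫ ω, φ (d ω) * η ω j ∂P) ^ 2) ≤ 2 * CB * G * Cf * a := by
  have hG0 : 0 ≤ G := le_trans (Real.sqrt_nonneg _) (hg 0)
  have hCB0 : 0 ≤ CB := (norm_nonneg _).trans hB
  -- norm of g u as Euclidean vector
  have hgE : ∀ u, ‖((WithLp.equiv 2 (Fin k → ℝ)).symm (g u) : EuclideanSpace ℝ (Fin k))‖ ≤ G := by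
    intro u
    rw [EuclideanSpace.norm_eq]
    convert hg u using 3 with j
    simp [Real.norm_eq_abs, sq_abs]
  -- bound on |φ (d ω)|
  have hφbdd : ∀ ω, |φ (d ω)| ≤ 1 := by
    intro ω
    refine (hφ1 ω).trans ?_
    split <;> norm_num
  -- the trimming set
  set S : Set Ω := {ω | d ω ≤ a} with hS_def
  have hS : MeasurableSet S := hd_meas measurableSet_Iic
  -- measure bound
  have hPS : P S ≤ ENNReal.ofReal (Cf * a) := by
    have hSeq : S = d ⁻¹' Set.Icc 0 a := by
      ext ω; simp [hS_def, Set.mem_Icc, hd0 ω]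
    have h1 : P S = (Measure.map d P) (Set.Icc 0 a) := by
      rw [Measure.map_apply hd_meas measurableSet_Icc, hSeq]
    rw [h1, hf, withDensity_apply _ measurableSet_Icc]
    calc ∫⁻ u in Set.Icc 0 a, ENNReal.ofReal (f u)
        ≤ ∫⁻ _ in Set.Icc 0 a, ENNReal.ofReal Cf := by
          refine lintegral_mono_ae ?_
          exact hfC.mono fun u hu => ENNReal.ofReal_le_ofReal hu
      _ = ENNReal.ofReal Cf * volume (Set.Icc (0:ℝ) a) := by
          rw [lintegral_const, Measure.restrict_apply_univ]
      _ = ENNReal.ofReal (Cf * a) := by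
          rw [Real.volume_Icc, sub_zero, ← ENNReal.ofReal_mul hCf.le]
  -- integral of |φ (d ω)| bound
  have hφd_meas : Measurable fun ω => φ (d ω) := hφ_meas.comp hd_meas
  have hφd_int : Integrable (fun ω => φ (d ω)) P := by
    refine Integrable.mono' (integrable_const 1) hφd_meas.aestronglyMeasurable ?_
    exact Filter.Eventually.of_forall fun ω => by
      simpa [Real.norm_eq_abs] using hφbdd ω
  have hφabs_int : Integrable (fun ω => |φ (d ω)|) P := hφd_int.abs
  have hφ_int_bound : ∫ ω, |φ (d ω)| ∂P ≤ Cf * a := by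
    have hind_int : Integrable (S.indicator fun _ => (1:ℝ)) P :=
      (integrable_const 1).indicator hS
    have hle : ∀ ω, |φ (d ω)| ≤ S.indicator (fun _ => (1:ℝ)) ω := by
      intro ω
      by_cases h : d ω ≤ a
      · simp only [Set.indicator_of_mem (show ω ∈ S from h)]
        exact (hφ1 ω).trans (by simp [h])
      · simp only [Set.indicator_of_notMem (show ω ∉ S from h)]
        simpa [h] using hφ1 ω
    calc ∫ ω, |φ (d ω)| ∂P ≤ ∫ ω, S.indicator (fun _ => (1:ℝ)) ω ∂P :=
          integral_mono hφabs_int hind_int hle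
      _ = (P S).toReal • (1:ℝ) := integral_indicator_const _ hS
      _ = (P S).toReal := by simp
      _ ≤ Cf * a := ENNReal.toReal_le_of_le_ofReal (by positivity) hPS
  -- conditional expectation step: ∫ φ(d) ε_j = 0
  have hm : MeasurableSpace.comap d inferInstance ≤ mΩ := hd_meas.comap_le
  haveI : SigmaFinite (P.trim hm) := by infer_instance
  have hdm : Measurable[MeasurableSpace.comap d inferInstance] d := fun s hs => ⟨s, hs, rfl⟩
  have hφdm : StronglyMeasurable[MeasurableSpace.comap d inferInstance] fun ω => φ (d ω) :=
    (hφ_meas.comp hdm).stronglyMeasurable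
  have hεzero : ∀ j, ∫ ω, φ (d ω) * ε ω j ∂P = 0 := by
    intro j
    have hprod_int : Integrable (fun ω => φ (d ω) * ε ω j) P := by
      refine (hε_int j).bdd_mul hφd_meas.aestronglyMeasurable (c := 1) (Filter.Eventually.of_forall fun ω => ?_)
      simpa [Real.norm_eq_abs] using hφbdd ω
    have h1 : ∫ ω, φ (d ω) * ε ω j ∂P
        = ∫ ω, (P[(fun ω => φ (d ω) * ε ω j) | MeasurableSpace.comap d inferInstance]) ω ∂P :=
      (integral_condExp hm).symm
    have h2 : P[(fun ω => φ (d ω) * ε ω j) | MeasurableSpace.comap d inferInstance]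
        =ᵐ[P] (fun ω => φ (d ω)) * P[(fun ω => ε ω j) | MeasurableSpace.comap d inferInstance] :=
      condExp_mul_of_stronglyMeasurable_left hφdm hprod_int (hε_int j)
    have h3 : (fun ω => φ (d ω)) * P[(fun ω => ε ω j) | MeasurableSpace.comap d inferInstance] =ᵐ[P] 0 := by
      filter_upwards [hε_cond j] with ω hω
      simp [Pi.mul_apply, hω]
    rw [h1, integral_congr_ae (h2.trans h3)]
    simp
  -- the centered g, Euclidean valued
  set c : Fin k → ℝ := fun l => ∫ ω', g (d ω') l ∂P with hc_def
  set gE : Ω → EuclideanSpace ℝ (Fin k) :=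
    fun ω => (WithLp.equiv 2 (Fin k → ℝ)).symm (g (d ω)) with hgE_def
  have hgE_meas : Measurable gE := by
    have : Continuous ((WithLp.equiv 2 (Fin k → ℝ)).symm :
        (Fin k → ℝ) → EuclideanSpace ℝ (Fin k)) :=
      (PiLp.continuousLinearEquiv 2 ℝ (fun _ : Fin k => ℝ)).symm.continuous
    exact this.measurable.comp (hg_meas.comp hd_meas)
  have hgE_int : Integrable gE P := by
    refine Integrable.mono' (integrable_const G) hgE_meas.aestronglyMeasurable ?_
    exact Filter.Eventually.of_forall fun ω => hgE (d ω)
  set cE : EuclideanSpace ℝ (Fin k) := ∫ ω, gE ω ∂P with hcE_def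
  have hcE_norm : ‖cE‖ ≤ G := by
    calc ‖cE‖ ≤ ∫ ω, ‖gE ω‖ ∂P := norm_integral_le_integral_norm _
      _ ≤ ∫ _, G ∂P := integral_mono hgE_int.norm (integrable_const G)
            (fun ω => hgE (d ω))
      _ = G := by simp
  have hcE_apply : ∀ l, cE l = c l := by
    intro l
    have := (EuclideanSpace.proj (𝕜 := ℝ) l).integral_comp_comm hgE_int
    simpa [hcE_def, hgE_def, hc_def] using this.symm
  -- the integrand, Euclidean valued
  set F : Ω → EuclideanSpace ℝ (Fin k) := fun ω => φ (d ω) • (gE ω - cE) with hF_def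
  have hF_meas : Measurable F :=
    (hφd_meas.smul (hgE_meas.sub measurable_const))
  have hF_norm : ∀ ω, ‖F ω‖ ≤ |φ (d ω)| * (2 * G) := by
    intro ω
    rw [hF_def, norm_smul, Real.norm_eq_abs]
    refine mul_le_mul_of_nonneg_left ?_ (abs_nonneg _)
    calc ‖gE ω - cE‖ ≤ ‖gE ω‖ + ‖cE‖ := norm_sub_le _ _
      _ ≤ G + G := add_le_add (hgE (d ω)) hcE_norm
      _ = 2 * G := by ring
  have hF_int : Integrable F P := by
    refine Integrable.mono' (integrable_const (2 * G)) hF_meas.aestronglyMeasurable ?_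
    refine Filter.Eventually.of_forall fun ω => (hF_norm ω).trans ?_
    calc |φ (d ω)| * (2 * G) ≤ 1 * (2 * G) :=
          mul_le_mul_of_nonneg_right (hφbdd ω) (by positivity)
      _ = 2 * G := one_mul _
  set vE : EuclideanSpace ℝ (Fin k) := ∫ ω, F ω ∂P with hvE_def
  have hvE_norm : ‖vE‖ ≤ 2 * G * (Cf * a) := by
    calc ‖vE‖ ≤ ∫ ω, ‖F ω‖ ∂P := norm_integral_le_integral_norm _
      _ ≤ ∫ ω, |φ (d ω)| * (2 * G) ∂P :=
          integral_mono hF_int.norm (hφabs_int.mul_const _) hF_norm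
      _ = (∫ ω, |φ (d ω)| ∂P) * (2 * G) := integral_mul_const _ _
      _ ≤ (Cf * a) * (2 * G) := by
          exact mul_le_mul_of_nonneg_right hφ_int_bound (by positivity)
      _ = 2 * G * (Cf * a) := by ring
  have hvE_apply : ∀ l, vE l = ∫ ω, φ (d ω) * (g (d ω) l - c l) ∂P := by
    intro l
    have := (EuclideanSpace.proj (𝕜 := ℝ) l).integral_comp_comm hF_int
    have h2 : ∀ ω, (EuclideanSpace.proj (𝕜 := ℝ) l) (F ω)
        = φ (d ω) * (g (d ω) l - c l) := by
      intro ω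
      simp [hF_def, hgE_def, hcE_apply l, smul_eq_mul]
    calc vE l = (EuclideanSpace.proj (𝕜 := ℝ) l) vE := rfl
      _ = ∫ ω, (EuclideanSpace.proj (𝕜 := ℝ) l) (F ω) ∂P := this.symm
      _ = ∫ ω, φ (d ω) * (g (d ω) l - c l) ∂P := by
          exact integral_congr_ae (Filter.Eventually.of_forall fun ω => h2 ω)
  -- integrability of each centered component times φ(d)
  have hcomp_bound : ∀ u l, |g u l| ≤ G := by
    intro u l
    have h1 : (g u l) ^ 2 ≤ ∑ j, (g u j) ^ 2 :=
      Finset.single_le_sum (f := fun j => (g u j) ^ 2) (fun j _ => sq_nonneg _)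
        (Finset.mem_univ l)
    calc |g u l| = Real.sqrt ((g u l) ^ 2) := (Real.sqrt_sq_eq_abs _).symm
      _ ≤ Real.sqrt (∑ j, (g u j) ^ 2) := Real.sqrt_le_sqrt h1
      _ ≤ G := hg u
  have hterm_int : ∀ l, Integrable (fun ω => φ (d ω) * (g (d ω) l - c l)) P := by
    intro l
    have hmeas : Measurable fun ω => φ (d ω) * (g (d ω) l - c l) :=
      hφd_meas.mul (((hg_meas.comp hd_meas).eval).sub measurable_const)
    refine Integrable.mono' (integrable_const (G + G)) hmeas.aestronglyMeasurable ?_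
    refine Filter.Eventually.of_forall fun ω => ?_
    rw [Real.norm_eq_abs, abs_mul]
    have hcl : |c l| ≤ G := by
      have : Integrable (fun ω' => g (d ω') l) P := by
        refine Integrable.mono' (integrable_const G)
          ((hg_meas.comp hd_meas).eval).aestronglyMeasurable ?_
        exact Filter.Eventually.of_forall fun ω' => by
          simpa [Real.norm_eq_abs] using hcomp_bound (d ω') l
      calc |c l| ≤ ∫ ω', |g (d ω') l| ∂P := by
            simpa [Real.norm_eq_abs] using
              norm_integral_le_integral_norm (μ := P) (fun ω' => g (d ω') l)
        _ ≤ ∫ _, G ∂P := integral_mono this.abs (integrable_const G)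
              (fun ω' => hcomp_bound (d ω') l)
        _ = G := by simp
    calc |φ (d ω)| * |g (d ω) l - c l| ≤ 1 * (|g (d ω) l| + |c l|) := by
          refine mul_le_mul (hφbdd ω) (abs_sub _ _) (abs_nonneg _) zero_le_one
      _ ≤ 1 * (G + G) := by
          refine mul_le_mul_of_nonneg_left (add_le_add (hcomp_bound _ _) hcl) zero_le_one
      _ = G + G := one_mul _
  -- key identity: each coordinate integral equals B.mulVec applied to vE
  have hkey : ∀ j, ∫ ω, φ (d ω) * η ω j ∂P = B.mulVec (fun l => vE l) j := by
    intro j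
    have hsplit : ∀ ω, φ (d ω) * η ω j
        = (∑ l, B j l * (φ (d ω) * (g (d ω) l - c l))) + φ (d ω) * ε ω j := by
      intro ω
      rw [hη ω]
      simp only [Pi.add_apply, Matrix.mulVec, dotProduct]
      rw [mul_add, Finset.mul_sum]
      congr 1
      exact Finset.sum_congr rfl fun l _ => by ring
    have hsum_int : Integrable (fun ω => ∑ l, B j l * (φ (d ω) * (g (d ω) l - c l))) P :=
      integrable_finset_sum _ fun l _ => (hterm_int l).const_mul _
    have hprod_int : Integrable (fun ω => φ (d ω) * ε ω j) P := by
      refine (hε_int j).bdd_mul hφd_meas.aestronglyMeasurable (c := 1) (Filter.Eventually.of_forall fun ω => ?_)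
      simpa [Real.norm_eq_abs] using hφbdd ω
    calc ∫ ω, φ (d ω) * η ω j ∂P
        = ∫ ω, ((∑ l, B j l * (φ (d ω) * (g (d ω) l - c l))) + φ (d ω) * ε ω j) ∂P := by
          exact integral_congr_ae (Filter.Eventually.of_forall hsplit)
      _ = (∫ ω, ∑ l, B j l * (φ (d ω) * (g (d ω) l - c l)) ∂P)
            + ∫ ω, φ (d ω) * ε ω j ∂P := integral_add hsum_int hprod_int
      _ = ∑ l, B j l * ∫ ω, φ (d ω) * (g (d ω) l - c l) ∂P := by
          rw [hεzero j, add_zero, integral_finset_sum _ fun l _ => (hterm_int l).const_mul _]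
          exact Finset.sum_congr rfl fun l _ => integral_const_mul _ _
      _ = B.mulVec (fun l => vE l) j := by
          simp only [Matrix.mulVec, dotProduct]
          exact Finset.sum_congr rfl fun l _ => by rw [hvE_apply l]
  -- finish with operator norm
  have hfinal : Real.sqrt (∑ j, (∫ ω, φ (d ω) * η ω j ∂P) ^ 2)
      = ‖(Matrix.toEuclideanCLM (𝕜 := ℝ) B) vE‖ := by
    have h1 : (Matrix.toEuclideanCLM (𝕜 := ℝ) B) vE
        = (WithLp.equiv 2 (Fin k → ℝ)).symm (B.mulVec (fun l => vE l)) := by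
      exact Matrix.toEuclideanCLM_toLp B (fun l => vE l)
    rw [h1, EuclideanSpace.norm_eq]
    congr 1
    refine Finset.sum_congr rfl fun j _ => ?_
    rw [hkey j]
    simp [Real.norm_eq_abs, sq_abs]
  rw [hfinal]
  calc ‖(Matrix.toEuclideanCLM (𝕜 := ℝ) B) vE‖
      ≤ ‖Matrix.toEuclideanCLM (𝕜 := ℝ) B‖ * ‖vE‖ := ContinuousLinearMap.le_opNorm _ _
    _ ≤ CB * (2 * G * (Cf * a)) :=
        mul_le_mul hB hvE_norm (norm_nonneg _) hCB0
    _ = 2 * CB * G * Cf * a := by ring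

theorem stmt_12 {Ω : Type*} [mΩ : MeasurableSpace Ω] (P : Measure Ω)
    [IsProbabilityMeasure P]
    (d : Ω → ℝ) (hd_meas : Measurable d) (hd0 : ∀ ω, 0 ≤ d ω)
    (f : ℝ → ℝ)
    (hf : Measure.map d P = volume.withDensity (fun u => ENNReal.ofReal (f u)))
    (a Cf : ℝ) (ha : 0 < a) (hCf : 0 < Cf)
    (hfC : ∀ᵐ u ∂(volume.restrict (Set.Icc (0 : ℝ) a)), f u ≤ Cf)
    (k : ℕ) (hk : 0 < k)
    (B : Matrix (Fin k) (Fin k) ℝ) (CB : ℝ)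
    (hB : ‖Matrix.toEuclideanCLM (𝕜 := ℝ) B‖ ≤ CB)
    (g : ℝ → Fin k → ℝ) (hg_meas : Measurable g) (G : ℝ)
    (hg : ∀ u, Real.sqrt (∑ j, (g u j) ^ 2) ≤ G)
    (ε : Ω → Fin k → ℝ)
    (hε_int : ∀ j, Integrable (fun ω => ε ω j) P)
    (hε_cond : ∀ j,
      P[(fun ω => ε ω j) | MeasurableSpace.comap d inferInstance] =ᵐ[P] 0)
    (η : Ω → Fin k → ℝ)
    (hη : ∀ ω, η ω = B.mulVec (fun j => g (d ω) j - ∫ ω', g (d ω') j ∂P) + ε ω)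
    (δ : Ω → ℝ) (hδ : ∀ ω, δ ω = if d ω ≤ a then (d ω - a) / a else 0) :
    Real.sqrt (∑ j, (∫ ω, δ ω * η ω j ∂P) ^ 2) ≤ 2 * CB * G * Cf * a
    ∧ Real.sqrt (∑ j, (∫ ω, (δ ω) ^ 2 * η ω j ∂P) ^ 2) ≤ 2 * CB * G * Cf * a := by
  set φ : ℝ → ℝ := fun u => if u ≤ a then (u - a) / a else 0 with hφ_def
  have hφ_meas : Measurable φ := by
    refine Measurable.ite measurableSet_Iic ?_ measurable_const
    exact (measurable_id.sub measurable_const).div_const a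
  have hφ1 : ∀ ω, |φ (d ω)| ≤ if d ω ≤ a then 1 else 0 := by
    intro ω
    by_cases h : d ω ≤ a
    · simp only [hφ_def, if_pos h]
      rw [abs_div, abs_of_pos ha, div_le_one ha, abs_sub_comm, abs_of_nonneg (by linarith [hd0 ω])]
      linarith [hd0 ω]
    · simp [hφ_def, if_neg h]
  have hφsq1 : ∀ ω, |(φ (d ω)) ^ 2| ≤ if d ω ≤ a then 1 else 0 := by
    intro ω
    rw [abs_pow, sq_abs, ← sq_abs]
    by_cases h : d ω ≤ a
    · simp only [if_pos h]
      have := hφ1 ω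
      rw [if_pos h] at this
      calc |φ (d ω)| ^ 2 ≤ 1 ^ 2 := pow_le_pow_left₀ (abs_nonneg _) this 2
        _ = 1 := one_pow 2
    · simp [hφ_def, if_neg h]
  constructor
  · have := aux_12 P d hd_meas hd0 f hf a Cf ha hCf hfC k B CB hB g hg_meas G hg
      ε hε_int hε_cond η hη φ hφ_meas hφ1
    have heq : ∀ j : Fin k, (∫ ω, δ ω * η ω j ∂P) = ∫ ω, φ (d ω) * η ω j ∂P := fun j =>
      integral_congr_ae (Filter.Eventually.of_forall fun ω => by simp only [hδ, hφ_def])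
    simpa only [heq] using this
  · have := aux_12 P d hd_meas hd0 f hf a Cf ha hCf hfC k B CB hB g hg_meas G hg
      ε hε_int hε_cond η hη (fun u => (φ u) ^ 2) (hφ_meas.pow_const 2) hφsq1
    have heq : ∀ j : Fin k, (∫ ω, (δ ω) ^ 2 * η ω j ∂P) = ∫ ω, (φ (d ω)) ^ 2 * η ω j ∂P :=
      fun j => integral_congr_ae (Filter.Eventually.of_forall fun ω => by
        simp only [hδ, hφ_def])
    simpa only [heq] using this
end
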